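/- Let E be a vector bundle of rank r on a smooth curve C, and F ⊂ E a rank-n subbundle. If s₁(⋀ⁿE) ≥ 0 then deg F ≤ n·μ(E), i.e. μ(F) ≤ μ(E). Consequently, if s₁(⋀ⁿE) ≥ 0 for all 1 ≤ n ≤ r−1, then E is semistable. -/

import Mathlib

/- STATEMENT 13: If `F ⊆ E` is a rank-`n` subbundle and `s₁(⋀ⁿE) ≥ 0`, then
`deg F ≤ n·μ(E)`, i.e. `μ(F) ≤ μ(E)`; consequently if `s₁(⋀ⁿE) ≥ 0` for all
`1 ≤ n ≤ r−1` then `E` is semistable.  Bundles are encoded numerically;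
`Lam n` plays the role of `⋀ⁿE` (rank `C(r,n)`, degree `C(r−1,n−1)·deg E`),
and `hwedge` records that a rank-`n` subbundle `F ⊆ E` of degree `f` yields
the line subbundle `⋀ⁿF ⊆ ⋀ⁿE` of degree `f`.  `s₁(⋀ⁿE) ≥ 0` is the statement
that every line subbundle degree `t` satisfies `deg − rk·t ≥ 0`. -/
structure BundleData where
  rk : ℕ
  deg : ℤ
  sub : Set (ℕ × ℤ)
  rk_pos : 0 < rk
  sub_proper : ∀ p ∈ sub, 0 < p.1 ∧ p.1 < rk

def BundleData.slope (B : BundleData) : ℚ := (B.deg : ℚ) / (B.rk : ℚ)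

def BundleData.Semistable (B : BundleData) : Prop :=
  ∀ p ∈ B.sub, (p.2 : ℚ) / (p.1 : ℚ) ≤ B.slope

/-!
Since `⋀ⁿE` has rank `C(r,n)` and degree `C(r-1,n-1)·deg E`, the line subbundle `⋀ⁿF` of degree
`deg F` gives `C(r,n)·deg F ≤ C(r-1,n-1)·deg E` by `s₁(⋀ⁿE) ≥ 0`. Multiplying by `r` and using
`r·C(r-1,n-1) = n·C(r,n)` this becomes `C(r,n)·(r·deg F) ≤ C(r,n)·(n·deg E)`, i.e. `μ(F) ≤ μ(E)`.
-/

theorem mul_le_mul_of_choose_mul_sub_nonneg {r n : ℕ} {d f : ℤ} (hn : 0 < n) (hnr : n ≤ r)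
    (h : 0 ≤ ((r - 1).choose (n - 1) : ℤ) * d - r.choose n * f) :
    (r : ℤ) * f ≤ n * d := by
  obtain ⟨m, rfl⟩ := Nat.exists_eq_add_one_of_ne_zero hn.ne'
  obtain ⟨s, rfl⟩ := Nat.exists_eq_add_one_of_ne_zero (by omega : r ≠ 0)
  simp only [Nat.add_sub_cancel] at h
  have hid : ((s + 1 : ℕ) : ℤ) * s.choose m = (s + 1).choose (m + 1) * (m + 1 : ℕ) := by
    exact_mod_cast Nat.add_one_mul_choose_eq s m
  have hpos : (0 : ℤ) < (s + 1).choose (m + 1) := by exact_mod_cast Nat.choose_pos hnr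
  have hscaled : 0 ≤ ((s + 1).choose (m + 1) : ℤ) * ((m + 1 : ℕ) * d - (s + 1 : ℕ) * f) := by
    have : ((s + 1).choose (m + 1) : ℤ) * ((m + 1 : ℕ) * d - (s + 1 : ℕ) * f)
        = (s + 1 : ℕ) * ((s.choose m : ℤ) * d - (s + 1).choose (m + 1) * f) := by
      linear_combination d * hid.symm
    rw [this]
    positivity
  linarith [nonneg_of_mul_nonneg_right hscaled hpos]

namespace BundleData

theorem le_mul_slope_of_rk_mul_le (B : BundleData) {n : ℕ} {f : ℤ}
    (h : (B.rk : ℤ) * f ≤ n * B.deg) : (f : ℚ) ≤ n * B.slope := by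
  have hrk : (0 : ℚ) < B.rk := by exact_mod_cast B.rk_pos
  rw [slope, ← mul_div_assoc, le_div_iff₀ hrk, mul_comm]
  exact_mod_cast h

theorem semistable_of_forall_le_mul_slope (B : BundleData)
    (h : ∀ p ∈ B.sub, (p.2 : ℚ) ≤ p.1 * B.slope) : B.Semistable := by
  intro p hp
  have hp1 : (0 : ℚ) < p.1 := by exact_mod_cast (B.sub_proper p hp).1
  rw [div_le_iff₀ hp1, mul_comm]
  exact h p hp

end BundleData

theorem semistable_from_exterior_segre_general
    (E : BundleData) (r : ℕ) (hrE : E.rk = r)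
    (Lam : ℕ → BundleData)
    (hrk : ∀ n, 1 ≤ n → n ≤ r - 1 → (Lam n).rk = r.choose n)
    (hdeg : ∀ n, 1 ≤ n → n ≤ r - 1 →
      (Lam n).deg = ((r - 1).choose (n - 1) : ℤ) * E.deg)
    (hwedge : ∀ n (f : ℤ), 1 ≤ n → n ≤ r - 1 →
      (n, f) ∈ E.sub → (1, f) ∈ (Lam n).sub)
    (hs1 : ∀ n, 1 ≤ n → n ≤ r - 1 →
      ∀ p ∈ (Lam n).sub, p.1 = 1 →
        0 ≤ (Lam n).deg - ((Lam n).rk : ℤ) * p.2) :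
    (∀ n (f : ℤ), 1 ≤ n → n ≤ r - 1 → (n, f) ∈ E.sub →
      (f : ℚ) ≤ (n : ℚ) * E.slope) ∧
    E.Semistable := by
  have subbundle_bound : ∀ n (f : ℤ), 1 ≤ n → n ≤ r - 1 → (n, f) ∈ E.sub →
      (f : ℚ) ≤ (n : ℚ) * E.slope := by
    intro n f hn hnr hF
    have hline := hs1 n hn hnr (1, f) (hwedge n f hn hnr hF) rfl
    rw [hdeg n hn hnr, hrk n hn hnr] at hline
    apply E.le_mul_slope_of_rk_mul_le
    rw [hrE]
    exact mul_le_mul_of_choose_mul_sub_nonneg hn (by omega) hline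
  refine ⟨subbundle_bound, E.semistable_of_forall_le_mul_slope fun p hp => ?_⟩
  have hproper := E.sub_proper p hp
  exact subbundle_bound p.1 p.2 hproper.1 (by omega) hp

theorem semistable_from_exterior_segre
    (E : BundleData) (r : ℕ) (hrE : E.rk = r) (hr : 2 ≤ r)
    (Lam : ℕ → BundleData)
    (hrk : ∀ n, 1 ≤ n → n ≤ r - 1 → (Lam n).rk = r.choose n)
    (hdeg : ∀ n, 1 ≤ n → n ≤ r - 1 →
      (Lam n).deg = ((r - 1).choose (n - 1) : ℤ) * E.deg)
    (hwedge : ∀ n (f : ℤ), 1 ≤ n → n ≤ r - 1 →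
      (n, f) ∈ E.sub → (1, f) ∈ (Lam n).sub)
    (hs1 : ∀ n, 1 ≤ n → n ≤ r - 1 →
      ∀ p ∈ (Lam n).sub, p.1 = 1 →
        0 ≤ (Lam n).deg - ((Lam n).rk : ℤ) * p.2) :
    (∀ n (f : ℤ), 1 ≤ n → n ≤ r - 1 → (n, f) ∈ E.sub →
      (f : ℚ) ≤ (n : ℚ) * E.slope) ∧
    E.Semistable :=
  semistable_from_exterior_segre_general E r hrE Lam hrk hdeg hwedge hs1
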